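/- Let N be the principal truncation of a set F (with 2 ≤ r_M(F) ≤ r(M) − 2) in a matroid M. If H is a flat of N that is skew to F in N, then H is a flat of M of the same rank (r_M(H) = r_N(H)) and H is skew to F in M. -/

import Mathlib

open Set
open scoped Classical

namespace MatroidPaper

variable {α : Type*}

/-- The rank of a set in a matroid: the supremum of cardinalities of independent subsets. -/
noncomputable def rkS (M : Matroid α) (X : Set α) : ℕ :=
  sSup {n | ∃ I, M.Indep I ∧ I ⊆ X ∧ I.ncard = n}

/-- The rank of a matroid. -/
noncomputable def rk (M : Matroid α) : ℕ := rkS M M.E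

/-- A hyperplane: a flat of rank `rk M - 1`. -/
def Hyp (M : Matroid α) (H : Set α) : Prop := M.IsFlat H ∧ rkS M H = rk M - 1

/-- Two sets are skew if the rank of their union is the sum of their ranks. -/
def SkewSets (M : Matroid α) (X Y : Set α) : Prop :=
  rkS M (X ∪ Y) = rkS M X + rkS M Y

/-- A simple matroid: every subset of the ground set with at most two elements is independent. -/
def SimpleM (M : Matroid α) : Prop := ∀ X ⊆ M.E, X.ncard ≤ 2 → M.Indep X

/-- A real-representable matroid. -/
def RealRep (M : Matroid α) : Prop :=
  ∃ (n : ℕ) (φ : α → (Fin n → ℝ)), ∀ I, I ⊆ M.E →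
    (M.Indep I ↔ LinearIndependent ℝ (fun x : I => φ x))

/-- A matroid is `k`-degenerate if it has rank at most one or its ground set is covered by
flats of rank at least two with `∑ (r(Fᵢ) - 1) ≤ k - 1`. -/
def Degen (M : Matroid α) (k : ℕ) : Prop :=
  rk M ≤ 1 ∨ ∃ (t : ℕ) (F : Fin t → Set α),
    (∀ i, M.IsFlat (F i) ∧ 2 ≤ rkS M (F i)) ∧
    M.E ⊆ ⋃ i, F i ∧ ∑ i, (rkS M (F i) - 1) ≤ k - 1

/-- A set `X` is `k`-degenerate in `M` if the restriction `M|X` is a `k`-degenerate matroid. -/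
def DegenSet (M : Matroid α) (X : Set α) (k : ℕ) : Prop := Degen (M.restrict X) k

/-- `N` is the (one-fold) principal truncation of `F` in `M`. -/
noncomputable def IsPT (M : Matroid α) (F : Set α) (N : Matroid α) : Prop :=
  N.E = M.E ∧ ∀ X ⊆ M.E,
    rkS N X = if F ⊆ M.closure X then rkS M X - 1 else rkS M X

/-- `N` is the complete principal truncation `M ÷ F` of `F` in `M`. -/
def IsCPT (M : Matroid α) (F : Set α) (N : Matroid α) : Prop :=
  N.E = M.E ∧ ∀ X ⊆ M.E,
    rkS N X = min (rkS M X + (rkS M F - 1)) (rkS M (X ∪ F)) - (rkS M F - 1)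

/-!
If `F ⊆ cl_M(H)`, truncation lowers the ranks of `H`, `F` and `H ∪ F` by one while
`r_M(H ∪ F) = r_M(H)`, so skewness in `N` would force `r_M(F) = 1`. Hence `F ⊄ cl_M(H)`: then `H`
keeps its rank while `F` and `H ∪ F` both lose one, which is skewness in `M`. Finally, for
`e ∈ cl_M(H)` we have `cl_M(H + e) = cl_M(H) ⊉ F`, so `r_N(H + e) = r_M(H) = r_N(H)` and
`e ∈ cl_N(H) = H`.
-/

section rkS

variable {M : Matroid α} [M.RankFinite] {X Y : Set α} {e : α}

lemma cast_rkS_eq_eRk (X : Set α) : (rkS M X : ℕ∞) = M.eRk X := by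
  obtain ⟨I, hI⟩ := M.exists_isBasis' X
  have hrk : rkS M X = I.ncard := by
    refine IsGreatest.csSup_eq ⟨⟨I, hI.indep, hI.subset, rfl⟩, ?_⟩
    rintro n ⟨J, hJ, hJX, rfl⟩
    have hle : J.encard ≤ I.encard := hI.encard_eq_eRk ▸ hJ.encard_le_eRk_of_subset hJX
    rwa [← hJ.finite.cast_ncard_eq, ← hI.indep.finite.cast_ncard_eq, Nat.cast_le] at hle
  rw [hrk, hI.indep.finite.cast_ncard_eq, hI.encard_eq_eRk]

lemma rkS_mono (h : X ⊆ Y) : rkS M X ≤ rkS M Y := by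
  have := M.eRk_mono h
  rwa [← cast_rkS_eq_eRk, ← cast_rkS_eq_eRk, Nat.cast_le] at this

lemma rkS_closure_eq (X : Set α) : rkS M (M.closure X) = rkS M X := by
  have := M.eRk_closure_eq X
  rwa [← cast_rkS_eq_eRk, ← cast_rkS_eq_eRk, Nat.cast_inj] at this

lemma rkS_union_eq_of_subset_closure (h : Y ⊆ M.closure X) (hX : X ⊆ M.E) :
    rkS M (X ∪ Y) = rkS M X := by
  refine le_antisymm ?_ (rkS_mono subset_union_left)
  rw [← rkS_closure_eq X]
  exact rkS_mono (union_subset (M.subset_closure X hX) h)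

lemma rkS_insert_eq_of_mem_closure (he : e ∈ M.closure X) : rkS M (insert e X) = rkS M X := by
  rw [← rkS_closure_eq, Matroid.closure_insert_eq_of_mem_closure he, rkS_closure_eq]

lemma mem_closure_of_rkS_insert_eq (he : e ∈ M.E) (h : rkS M (insert e X) = rkS M X) :
    e ∈ M.closure X := by
  by_contra heX
  have := Matroid.eRk_insert_eq_add_one ⟨he, heX⟩
  rw [← cast_rkS_eq_eRk, ← cast_rkS_eq_eRk, h] at this
  norm_cast at this
  omega

end rkS

namespace IsPT

variable {M N : Matroid α} {F X H : Set α}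

lemma rkS_of_subset_closure (hN : IsPT M F N) (hX : X ⊆ M.E) (hFX : F ⊆ M.closure X) :
    rkS N X = rkS M X - 1 := by
  rw [hN.2 X hX, if_pos hFX]

lemma rkS_of_not_subset_closure (hN : IsPT M F N) (hX : X ⊆ M.E) (hFX : ¬ F ⊆ M.closure X) :
    rkS N X = rkS M X := by
  rw [hN.2 X hX, if_neg hFX]

lemma rkS_self (hN : IsPT M F N) (hF : F ⊆ M.E) : rkS N F = rkS M F - 1 :=
  hN.rkS_of_subset_closure hF (M.subset_closure F hF)

lemma rkS_union_self (hN : IsPT M F N) (hX : X ⊆ M.E) (hF : F ⊆ M.E) :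
    rkS N (X ∪ F) = rkS M (X ∪ F) - 1 :=
  hN.rkS_of_subset_closure (union_subset hX hF)
    (subset_union_right.trans (M.subset_closure _ (union_subset hX hF)))

variable [M.RankFinite]

lemma not_subset_closure_of_skewSets (hN : IsPT M F N) (hF : F ⊆ M.E) (h2 : 2 ≤ rkS M F)
    (hH : H ⊆ M.E) (hskew : SkewSets N H F) : ¬ F ⊆ M.closure H := by
  intro hFH
  have hunion : rkS M (H ∪ F) = rkS M H := rkS_union_eq_of_subset_closure hFH hH
  rw [SkewSets, hN.rkS_union_self hH hF, hN.rkS_of_subset_closure hH hFH, hN.rkS_self hF,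
    hunion] at hskew
  omega

lemma skewSets_of_skewSets (hN : IsPT M F N) (hF : F ⊆ M.E) (hF1 : 1 ≤ rkS M F)
    (hH : H ⊆ M.E) (hFH : ¬ F ⊆ M.closure H) (hskew : SkewSets N H F) : SkewSets M H F := by
  have hFU : rkS M F ≤ rkS M (H ∪ F) := rkS_mono subset_union_right
  rw [SkewSets, hN.rkS_union_self hH hF, hN.rkS_of_not_subset_closure hH hFH,
    hN.rkS_self hF] at hskew
  rw [SkewSets]
  omega

lemma isFlat_of_isFlat [N.RankFinite] (hN : IsPT M F N) (hH : N.IsFlat H)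
    (hFH : ¬ F ⊆ M.closure H) : M.IsFlat H := by
  have hHE : H ⊆ M.E := hN.1 ▸ hH.subset_ground
  refine Matroid.isFlat_iff_closure_eq.2 (subset_antisymm (fun e he ↦ ?_) (M.subset_closure H hHE))
  have heE : e ∈ M.E := Matroid.mem_ground_of_mem_closure he
  have hFe : ¬ F ⊆ M.closure (insert e H) := by
    rwa [Matroid.closure_insert_eq_of_mem_closure he]
  have hrk : rkS N (insert e H) = rkS N H := by
    rw [hN.rkS_of_not_subset_closure (insert_subset heE hHE) hFe,
      hN.rkS_of_not_subset_closure hHE hFH, rkS_insert_eq_of_mem_closure he]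
  rw [← hH.closure]
  exact mem_closure_of_rkS_insert_eq (hN.1 ▸ heE) hrk

end IsPT

theorem stmt6_general (M N : Matroid α) [M.Finite] (F : Set α) (hF : F ⊆ M.E)
    (h2 : 2 ≤ rkS M F) (hN : IsPT M F N)
    (H : Set α) (hH : N.IsFlat H) (hskew : SkewSets N H F) :
    M.IsFlat H ∧ rkS M H = rkS N H ∧ SkewSets M H F := by
  have : N.Finite := ⟨hN.1 ▸ M.ground_finite⟩
  have hHE : H ⊆ M.E := hN.1 ▸ hH.subset_ground
  have hFH : ¬ F ⊆ M.closure H := hN.not_subset_closure_of_skewSets hF h2 hHE hskew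
  exact ⟨hN.isFlat_of_isFlat hH hFH, (hN.rkS_of_not_subset_closure hHE hFH).symm,
    hN.skewSets_of_skewSets hF (by omega) hHE hFH hskew⟩

/-- A flat of the principal truncation that is skew to `F` is a flat of `M` of the same rank,
skew to `F` in `M`. -/
theorem stmt6 (M N : Matroid α) [M.Finite] (F : Set α) (hF : F ⊆ M.E)
    (h2 : 2 ≤ rkS M F) (hFr : rkS M F ≤ rk M - 2) (hN : IsPT M F N)
    (H : Set α) (hH : N.IsFlat H) (hskew : SkewSets N H F) :
    M.IsFlat H ∧ rkS M H = rkS N H ∧ SkewSets M H F :=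
  stmt6_general M N F hF h2 hN H hH hskew

end MatroidPaper
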